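/- arXiv:2502.17079 — 2 statements merged into one kernel-verified Lean document; each statement's English description precedes it below -/
import Mathlib

section
/- For a Lagrangian L(q, v, S) with friction force F(q, v, S), if q(t), S(t) satisfy the thermo-mechanical equations d/dt(∂L/∂v) - ∂L/∂q = F and (∂L/∂S)·Ṡ = F·q̇, then the total energy E = (∂L/∂v)·q̇ - L is conserved: dE/dt = 0. -/
open scoped RealInnerProductSpace

/-- For a Lagrangian `L(q, v, S)` with friction force `F(q, v, S)`,
if `q(t), S(t)` satisfy the thermo-mechanical equations
`d/dt(∂L/∂v) - ∂L/∂q = F` and `(∂L/∂S)·Ṡ = F·q̇`, then the total energy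
`E = (∂L/∂v)·q̇ - L` is conserved: `dE/dt = 0`. -/
theorem energy_conservation_thermo_mech {n : ℕ}
    (L : EuclideanSpace ℝ (Fin n) → EuclideanSpace ℝ (Fin n) → ℝ → ℝ)
    (F : EuclideanSpace ℝ (Fin n) → EuclideanSpace ℝ (Fin n) → ℝ →
      EuclideanSpace ℝ (Fin n))
    (q : ℝ → EuclideanSpace ℝ (Fin n)) (S : ℝ → ℝ)
    (hL : ContDiff ℝ (⊤ : ℕ∞) (fun p : EuclideanSpace ℝ (Fin n) ×
      EuclideanSpace ℝ (Fin n) × ℝ => L p.1 p.2.1 p.2.2))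
    (hq : ContDiff ℝ (⊤ : ℕ∞) q) (hS : ContDiff ℝ (⊤ : ℕ∞) S)
    -- Euler–Lagrange equation with friction:  d/dt (∂L/∂v) - ∂L/∂q = F
    (hEL : ∀ t : ℝ,
      deriv (fun τ => fderiv ℝ (fun v => L (q τ) v (S τ)) (deriv q τ)) t
        - fderiv ℝ (fun x => L x (deriv q t) (S t)) (q t)
      = innerSL ℝ (F (q t) (deriv q t) (S t)))
    -- phenomenological (thermal) equation:  (∂L/∂S)·Ṡ = F·q̇
    (hTh : ∀ t : ℝ,
      deriv (fun s => L (q t) (deriv q t) s) (S t) * deriv S t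
      = ⟪F (q t) (deriv q t) (S t), deriv q t⟫) :
    ∀ t : ℝ,
      deriv (fun τ =>
        fderiv ℝ (fun v => L (q τ) v (S τ)) (deriv q τ) (deriv q τ)
          - L (q τ) (deriv q τ) (S τ)) t = 0 := by
  intro t
  let Φ : EuclideanSpace ℝ (Fin n) × EuclideanSpace ℝ (Fin n) × ℝ → ℝ := fun p => L p.1 p.2.1 p.2.2
  have hΦ : ContDiff ℝ (⊤ : ℕ∞) Φ := by exact hL
  have hΦd : Differentiable ℝ Φ := hΦ.differentiable (by simp)
  let j1 : EuclideanSpace ℝ (Fin n) →L[ℝ] EuclideanSpace ℝ (Fin n) × EuclideanSpace ℝ (Fin n) × ℝ :=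
    (ContinuousLinearMap.id ℝ (EuclideanSpace ℝ (Fin n))).prod ((0 : EuclideanSpace ℝ (Fin n) →L[ℝ] EuclideanSpace ℝ (Fin n)).prod (0 : EuclideanSpace ℝ (Fin n) →L[ℝ] ℝ))
  let j2 : EuclideanSpace ℝ (Fin n) →L[ℝ] EuclideanSpace ℝ (Fin n) × EuclideanSpace ℝ (Fin n) × ℝ :=
    (0 : EuclideanSpace ℝ (Fin n) →L[ℝ] EuclideanSpace ℝ (Fin n)).prod ((ContinuousLinearMap.id ℝ (EuclideanSpace ℝ (Fin n))).prod (0 : EuclideanSpace ℝ (Fin n) →L[ℝ] ℝ))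
  let j3 : ℝ →L[ℝ] EuclideanSpace ℝ (Fin n) × EuclideanSpace ℝ (Fin n) × ℝ :=
    (0 : ℝ →L[ℝ] EuclideanSpace ℝ (Fin n)).prod ((0 : ℝ →L[ℝ] EuclideanSpace ℝ (Fin n)).prod (ContinuousLinearMap.id ℝ ℝ))
  have key1 : ∀ (x v : EuclideanSpace ℝ (Fin n)) (s : ℝ),
      fderiv ℝ (fun y => L y v s) x = (fderiv ℝ Φ (x, v, s)).comp j1 := by
    intro x v s
    have hι : HasFDerivAt (fun y : EuclideanSpace ℝ (Fin n) => ((y, v, s) : EuclideanSpace ℝ (Fin n) × EuclideanSpace ℝ (Fin n) × ℝ)) j1 x :=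
      HasFDerivAt.prodMk (hasFDerivAt_id x) (HasFDerivAt.prodMk (hasFDerivAt_const v x) (hasFDerivAt_const s x))
    exact (((hΦd (x, v, s)).hasFDerivAt).comp x hι).fderiv
  have key2 : ∀ (x v : EuclideanSpace ℝ (Fin n)) (s : ℝ),
      fderiv ℝ (fun w => L x w s) v = (fderiv ℝ Φ (x, v, s)).comp j2 := by
    intro x v s
    have hι : HasFDerivAt (fun w : EuclideanSpace ℝ (Fin n) => ((x, w, s) : EuclideanSpace ℝ (Fin n) × EuclideanSpace ℝ (Fin n) × ℝ)) j2 v :=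
      HasFDerivAt.prodMk (hasFDerivAt_const x v) (HasFDerivAt.prodMk (hasFDerivAt_id v) (hasFDerivAt_const s v))
    exact (((hΦd (x, v, s)).hasFDerivAt).comp v hι).fderiv
  have key3 : ∀ (x v : EuclideanSpace ℝ (Fin n)) (s : ℝ),
      fderiv ℝ (fun r => L x v r) s = (fderiv ℝ Φ (x, v, s)).comp j3 := by
    intro x v s
    have hι : HasFDerivAt (fun r : ℝ => ((x, v, r) : EuclideanSpace ℝ (Fin n) × EuclideanSpace ℝ (Fin n) × ℝ)) j3 s :=
      HasFDerivAt.prodMk (hasFDerivAt_const x s) (HasFDerivAt.prodMk (hasFDerivAt_const v s) (hasFDerivAt_id s))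
    exact (((hΦd (x, v, s)).hasFDerivAt).comp s hι).fderiv
  let G : EuclideanSpace ℝ (Fin n) × EuclideanSpace ℝ (Fin n) × ℝ → (EuclideanSpace ℝ (Fin n) →L[ℝ] ℝ) := fun p => (fderiv ℝ Φ p).comp j2
  have hG : ContDiff ℝ (⊤ : ℕ∞) G :=
    (hΦ.fderiv_right (by simp)).clm_comp contDiff_const
  let c : ℝ → EuclideanSpace ℝ (Fin n) × EuclideanSpace ℝ (Fin n) × ℝ := fun τ => (q τ, deriv q τ, S τ)
  have hq1 : ContDiff ℝ (⊤ : ℕ∞) (deriv q) :=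
    (contDiff_infty_iff_deriv.mp (hq.of_le (by simp))).2
  have hdq : HasDerivAt q (deriv q t) t := (hq.differentiable (by simp) t).hasDerivAt
  have hddq : HasDerivAt (deriv q) (deriv (deriv q) t) t :=
    (hq1.differentiable (by simp) t).hasDerivAt
  have hdS : HasDerivAt S (deriv S t) t := (hS.differentiable (by simp) t).hasDerivAt
  have hc : HasDerivAt c (deriv q t, deriv (deriv q) t, deriv S t) t :=
    HasDerivAt.prodMk hdq (HasDerivAt.prodMk hddq hdS)
  set c' : EuclideanSpace ℝ (Fin n) × EuclideanSpace ℝ (Fin n) × ℝ := (deriv q t, deriv (deriv q) t, deriv S t) with hc'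
  have hGc : HasDerivAt (fun τ => G (c τ)) (fderiv ℝ G (c t) c') t :=
    ((hG.differentiable (by simp) (c t)).hasFDerivAt).comp_hasDerivAt t hc
  have hΦc : HasDerivAt (fun τ => Φ (c τ)) (fderiv ℝ Φ (c t) c') t :=
    ((hΦd (c t)).hasFDerivAt).comp_hasDerivAt t hc
  -- the energy function rewritten through G
  have hfun : (fun τ =>
      fderiv ℝ (fun v => L (q τ) v (S τ)) (deriv q τ) (deriv q τ)
        - L (q τ) (deriv q τ) (S τ))
      = fun τ => (G (c τ)) (deriv q τ) - Φ (c τ) := by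
    funext τ
    rw [key2]
  have hEderiv : HasDerivAt (fun τ => (G (c τ)) (deriv q τ) - Φ (c τ))
      ((fderiv ℝ G (c t) c') (deriv q t) + (G (c t)) (deriv (deriv q) t)
        - fderiv ℝ Φ (c t) c') t :=
    (hGc.clm_apply hddq).sub hΦc
  rw [hfun, hEderiv.deriv]
  -- decompose fderiv Φ (c t) c'
  have hsplit : fderiv ℝ Φ (c t) c'
      = fderiv ℝ Φ (c t) (deriv q t, 0, 0)
        + fderiv ℝ Φ (c t) (0, deriv (deriv q) t, 0)
        + fderiv ℝ Φ (c t) (0, 0, deriv S t) := by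
    rw [← map_add, ← map_add]
    congr 1
    simp [Prod.ext_iff, c']
  have h2 : (G (c t)) (deriv (deriv q) t)
      = fderiv ℝ Φ (c t) (0, deriv (deriv q) t, 0) := by
    simp [G, j2, c]
  have h1 : fderiv ℝ Φ (c t) (deriv q t, 0, 0)
      = fderiv ℝ (fun x => L x (deriv q t) (S t)) (q t) (deriv q t) := by
    rw [key1]
    simp [j1, c]
  have h3 : fderiv ℝ Φ (c t) (0, 0, deriv S t)
      = deriv (fun s => L (q t) (deriv q t) s) (S t) * deriv S t := by
    have := key3 (q t) (deriv q t) (S t)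
    have hder : deriv (fun s => L (q t) (deriv q t) s) (S t)
        = fderiv ℝ (fun s => L (q t) (deriv q t) s) (S t) 1 := (fderiv_apply_one_eq_deriv).symm
    rw [hder, this]
    have : fderiv ℝ Φ (c t) (0, 0, deriv S t)
        = deriv S t • fderiv ℝ Φ (c t) ((0 : EuclideanSpace ℝ (Fin n)), (0 : EuclideanSpace ℝ (Fin n)), (1:ℝ)) := by
      rw [← map_smul]
      congr 1
      simp [Prod.ext_iff]
    rw [this]
    simp [j3, c, mul_comm]
  -- use hEL
  have hELfun : (fun τ => fderiv ℝ (fun v => L (q τ) v (S τ)) (deriv q τ))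
      = fun τ => G (c τ) := by
    funext τ
    exact key2 (q τ) (deriv q τ) (S τ)
  have hEL' := hEL t
  rw [hELfun, hGc.deriv] at hEL'
  have hELapp : fderiv ℝ G (c t) c' (deriv q t)
      - fderiv ℝ (fun x => L x (deriv q t) (S t)) (q t) (deriv q t)
      = ⟪F (q t) (deriv q t) (S t), deriv q t⟫ := by
    have := congrArg (fun (T : EuclideanSpace ℝ (Fin n) →L[ℝ] ℝ) => T (deriv q t)) hEL'
    simpa using this
  have hTh' := hTh t
  rw [hsplit, ← h2, h1, h3]
  linarith [hELapp, hTh']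
end

section
/- Given the material evolution equations of extended irreversible thermodynamics for a Lagrangian density 𝔏̂(φ, φ̇, ∇φ, ϱ, S, Q) (no viscous flux), the total energy density 𝔈̂ = (∂𝔏̂/∂φ̇)·φ̇ - 𝔏̂ satisfies the local balance d𝔈̂/dt = DIV(P^tot·φ̇ - 𝔗 J), where P^tot = -∂𝔏̂/∂∇φ, 𝔗 = -∂𝔏̂/∂S, and the equations of motion are d/dt(∂𝔏̂/∂φ̇) - ∂𝔏̂/∂φ = DIV(-∂𝔏̂/∂∇φ) and -(∂𝔏̂/∂S)(Ṡ + DIV J) - (∂𝔏̂/∂Q)·Q̇ = J·∇(∂𝔏̂/∂S). -/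
noncomputable section

abbrev E3 := EuclideanSpace ℝ (Fin 3)
abbrev M3 := Fin 3 → Fin 3 → ℝ

/-- Material partial derivative `∂_A g` at `X`. -/
def pd (g : E3 → ℝ) (A : Fin 3) (X : E3) : ℝ :=
  fderiv ℝ g X (EuclideanSpace.single A 1)

variable (L : E3 → E3 → M3 → ℝ → ℝ → E3 → ℝ)
variable (φ : ℝ → E3 → E3) (ϱ : E3 → ℝ) (S : ℝ → E3 → ℝ) (Q : ℝ → E3 → E3)

/-- Material velocity `φ̇`. -/
def vel (t : ℝ) (X : E3) : E3 := WithLp.toLp 2 (fun a => deriv (fun s => φ s X a) t)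

/-- Deformation gradient `∇φ`, components `(∇φ)^a_A = ∂_A φ^a`. -/
def dg (t : ℝ) (X : E3) : M3 := fun a A => pd (fun Y => φ t Y a) A X

/-- Value of the nonequilibrium Lagrangian density along the solution. -/
def Lval (t : ℝ) (X : E3) : ℝ :=
  L (φ t X) (vel φ t X) (dg φ t X) (ϱ X) (S t X) (Q t X)

/-- `∂𝔏̂/∂φ̇`, component `a`, along the solution. -/
def Lv (t : ℝ) (X : E3) (a : Fin 3) : ℝ :=
  fderiv ℝ (fun v => L (φ t X) v (dg φ t X) (ϱ X) (S t X) (Q t X))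
    (vel φ t X) (EuclideanSpace.single a 1)

/-- `∂𝔏̂/∂φ`, component `a`, along the solution. -/
def Lphi (t : ℝ) (X : E3) (a : Fin 3) : ℝ :=
  fderiv ℝ (fun y => L y (vel φ t X) (dg φ t X) (ϱ X) (S t X) (Q t X))
    (φ t X) (EuclideanSpace.single a 1)

/-- `∂𝔏̂/∂∇φ`, component `(a,A)`, along the solution. -/
def LF (t : ℝ) (X : E3) (a A : Fin 3) : ℝ :=
  fderiv ℝ (fun Fm => L (φ t X) (vel φ t X) Fm (ϱ X) (S t X) (Q t X))
    (dg φ t X) (Pi.single a (Pi.single A 1))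

/-- `∂𝔏̂/∂S` along the solution. -/
def LS (t : ℝ) (X : E3) : ℝ :=
  deriv (fun s => L (φ t X) (vel φ t X) (dg φ t X) (ϱ X) s (Q t X)) (S t X)

/-- `∂𝔏̂/∂Q`, component `a`, along the solution. -/
def LQ (t : ℝ) (X : E3) (a : Fin 3) : ℝ :=
  fderiv ℝ (fun Qv => L (φ t X) (vel φ t X) (dg φ t X) (ϱ X) (S t X) Qv)
    (Q t X) (EuclideanSpace.single a 1)

/-- Total energy density `𝔈̂ = (∂𝔏̂/∂φ̇)·φ̇ - 𝔏̂`. -/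
def En (t : ℝ) (X : E3) : ℝ :=
  (∑ a : Fin 3, Lv L φ ϱ S Q t X a * vel φ t X a) - Lval L φ ϱ S Q t X

/-! ### Auxiliary infrastructure -/

abbrev Wsp := E3 × E3 × M3 × ℝ × ℝ × E3

lemma euclid_decomp (x : E3) : ∑ a : Fin 3, x a • EuclideanSpace.single a (1:ℝ) = x := by
  ext a
  rw [show ((∑ a : Fin 3, x a • EuclideanSpace.single a (1:ℝ)) a)
      = ∑ b : Fin 3, (x b • EuclideanSpace.single b (1:ℝ)) a by rw [WithLp.ofLp_sum]; exact Finset.sum_apply a _ _]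
  simp [EuclideanSpace.single_apply]

lemma m3_decomp (m : M3) :
    ∑ a : Fin 3, ∑ A : Fin 3, m a A • (Pi.single a (Pi.single A (1:ℝ)) : M3) = m := by
  funext b B
  simp [Finset.sum_apply, Pi.single_apply, apply_ite (fun f : Fin 3 → ℝ => f B)]

lemma wsp_decomp (w : Wsp) :
    w = (∑ a : Fin 3, w.1 a • ((EuclideanSpace.single a 1 : E3), (0:E3), (0:M3), (0:ℝ), (0:ℝ), (0:E3)))
      + (∑ a : Fin 3, w.2.1 a • ((0:E3), (EuclideanSpace.single a 1 : E3), (0:M3), (0:ℝ), (0:ℝ), (0:E3)))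
      + (∑ a : Fin 3, ∑ A : Fin 3, w.2.2.1 a A • ((0:E3), (0:E3), (Pi.single a (Pi.single A 1) : M3), (0:ℝ), (0:ℝ), (0:E3)))
      + w.2.2.2.1 • ((0:E3), (0:E3), (0:M3), (1:ℝ), (0:ℝ), (0:E3))
      + w.2.2.2.2.1 • ((0:E3), (0:E3), (0:M3), (0:ℝ), (1:ℝ), (0:E3))
      + (∑ a : Fin 3, w.2.2.2.2.2 a • ((0:E3), (0:E3), (0:M3), (0:ℝ), (0:ℝ), (EuclideanSpace.single a 1 : E3))) := by
  have h1 := euclid_decomp w.1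
  have h2 := euclid_decomp w.2.1
  have h3 := m3_decomp w.2.2.1
  have h6 := euclid_decomp w.2.2.2.2.2
  simp [Prod.ext_iff, Prod.fst_sum, Prod.snd_sum, Prod.smul_fst, Prod.smul_snd, h1, h2, h3, h6]

lemma clm_expand (T : Wsp →L[ℝ] ℝ) (w : Wsp) :
    T w = (∑ a : Fin 3, w.1 a * T (EuclideanSpace.single a 1, 0, 0, 0, 0, 0))
      + (∑ a : Fin 3, w.2.1 a * T (0, EuclideanSpace.single a 1, 0, 0, 0, 0))
      + (∑ a : Fin 3, ∑ A : Fin 3, w.2.2.1 a A * T (0, 0, Pi.single a (Pi.single A 1), 0, 0, 0))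
      + w.2.2.2.1 * T (0, 0, 0, 1, 0, 0)
      + w.2.2.2.2.1 * T (0, 0, 0, 0, 1, 0)
      + (∑ a : Fin 3, w.2.2.2.2.2 a * T (0, 0, 0, 0, 0, EuclideanSpace.single a 1)) := by
  conv_lhs => rw [wsp_decomp w]
  simp only [map_add, map_sum, map_smul, smul_eq_mul]

/-- Uncurried Lagrangian. -/
def Lfull : Wsp → ℝ := fun p => L p.1 p.2.1 p.2.2.1 p.2.2.2.1 p.2.2.2.2.1 p.2.2.2.2.2

/-- The state map along the solution. -/
def sm (t : ℝ) (X : E3) : Wsp :=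
  (φ t X,
   (WithLp.toLp 2 (fun a => fderiv ℝ (fun p : ℝ × E3 => φ p.1 p.2 a) (t, X) (1, 0)) : E3),
   fun a A => fderiv ℝ (fun p : ℝ × E3 => φ p.1 p.2 a) (t, X) (0, EuclideanSpace.single A 1),
   ϱ X, S t X, Q t X)

lemma vel_eq (hφ : ContDiff ℝ (⊤ : ℕ∞) (fun p : ℝ × E3 => φ p.1 p.2)) (t : ℝ) (X : E3) (a : Fin 3) :
    vel φ t X a = fderiv ℝ (fun p : ℝ × E3 => φ p.1 p.2 a) (t, X) (1, 0) := by
  have hf : ContDiff ℝ (⊤ : ℕ∞) (fun p : ℝ × E3 => φ p.1 p.2 a) := contDiff_euclidean.1 hφ a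
  have hc : HasDerivAt (fun s : ℝ => (s, X)) ((1:ℝ), (0:E3)) t :=
    (hasDerivAt_id t).prodMk (hasDerivAt_const t X)
  have h : HasDerivAt (fun s : ℝ => φ s X a)
      (fderiv ℝ (fun p : ℝ × E3 => φ p.1 p.2 a) (t, X) (1, 0)) t :=
    by have h' := (hf.differentiable (by simp) (t, X)).hasFDerivAt.comp_hasDerivAt t hc; exact h'
  exact h.deriv

lemma dg_eq (hφ : ContDiff ℝ (⊤ : ℕ∞) (fun p : ℝ × E3 => φ p.1 p.2)) (t : ℝ) (X : E3) (a A : Fin 3) :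
    dg φ t X a A
      = fderiv ℝ (fun p : ℝ × E3 => φ p.1 p.2 a) (t, X) (0, EuclideanSpace.single A 1) := by
  have hf : ContDiff ℝ (⊤ : ℕ∞) (fun p : ℝ × E3 => φ p.1 p.2 a) := contDiff_euclidean.1 hφ a
  have hc : HasFDerivAt (fun Y : E3 => ((t, Y) : ℝ × E3))
      ((0 : E3 →L[ℝ] ℝ).prod (ContinuousLinearMap.id ℝ E3)) X :=
    (hasFDerivAt_const t X).prodMk (hasFDerivAt_id X)
  have h : HasFDerivAt (fun Y : E3 => φ t Y a)
      ((fderiv ℝ (fun p : ℝ × E3 => φ p.1 p.2 a) (t, X)).comp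
        ((0 : E3 →L[ℝ] ℝ).prod (ContinuousLinearMap.id ℝ E3))) X :=
    ((hf.differentiable (by simp) (t, X)).hasFDerivAt).comp X hc
  rw [dg, pd, h.fderiv]
  simp

lemma sm_eq (hφ : ContDiff ℝ (⊤ : ℕ∞) (fun p : ℝ × E3 => φ p.1 p.2)) (t : ℝ) (X : E3) :
    sm φ ϱ S Q t X = (φ t X, vel φ t X, dg φ t X, ϱ X, S t X, Q t X) := by
  refine Prod.ext rfl (Prod.ext ?_ (Prod.ext ?_ rfl))
  · ext a; exact (vel_eq φ hφ t X a).symm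
  · funext a A; exact (dg_eq φ hφ t X a A).symm

lemma sm_smooth (hφ : ContDiff ℝ (⊤ : ℕ∞) (fun p : ℝ × E3 => φ p.1 p.2)) (hϱ : ContDiff ℝ (⊤ : ℕ∞) ϱ) (hS : ContDiff ℝ (⊤ : ℕ∞) (fun p : ℝ × E3 => S p.1 p.2)) (hQ : ContDiff ℝ (⊤ : ℕ∞) (fun p : ℝ × E3 => Q p.1 p.2)) : ContDiff ℝ (⊤ : ℕ∞) (fun p : ℝ × E3 => sm φ ϱ S Q p.1 p.2) := by
  refine hφ.prodMk (ContDiff.prodMk ?_ (ContDiff.prodMk ?_ ?_))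
  · exact contDiff_euclidean.2 fun a =>
      ((contDiff_euclidean.1 hφ a).fderiv_right (by simp)).clm_apply contDiff_const
  · exact contDiff_pi.2 fun a => contDiff_pi.2 fun A =>
      ((contDiff_euclidean.1 hφ a).fderiv_right (by simp)).clm_apply contDiff_const
  · exact (hϱ.comp contDiff_snd).prodMk (hS.prodMk hQ)

section slots
variable (hL : ContDiff ℝ (⊤ : ℕ∞) (fun p : E3 × E3 × M3 × ℝ × ℝ × E3 =>
      L p.1 p.2.1 p.2.2.1 p.2.2.2.1 p.2.2.2.2.1 p.2.2.2.2.2))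

lemma slot1 (hL : ContDiff ℝ (⊤ : ℕ∞) (Lfull L)) (c1 c2 : E3) (c3 : M3) (c4 c5 : ℝ) (c6 : E3) (a : Fin 3) :
    fderiv ℝ (fun y => L y c2 c3 c4 c5 c6) c1 (EuclideanSpace.single a 1)
      = fderiv ℝ (Lfull L) (c1, c2, c3, c4, c5, c6) (EuclideanSpace.single a 1, 0, 0, 0, 0, 0) := by
  have hι : HasFDerivAt (fun y : E3 => ((y, c2, c3, c4, c5, c6) : Wsp))
      ((ContinuousLinearMap.id ℝ E3).prod 0) c1 :=
    (hasFDerivAt_id c1).prodMk (hasFDerivAt_const (c2, c3, c4, c5, c6) c1)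
  have h : HasFDerivAt (fun y : E3 => L y c2 c3 c4 c5 c6)
      ((fderiv ℝ (Lfull L) (c1, c2, c3, c4, c5, c6)).comp
        ((ContinuousLinearMap.id ℝ E3).prod 0)) c1 :=
    ((hL.differentiable (by simp) _).hasFDerivAt).comp c1 hι
  rw [h.fderiv]
  simp
  rfl

lemma slot2 (hL : ContDiff ℝ (⊤ : ℕ∞) (Lfull L)) (c1 c2 : E3) (c3 : M3) (c4 c5 : ℝ) (c6 : E3) (a : Fin 3) :
    fderiv ℝ (fun v => L c1 v c3 c4 c5 c6) c2 (EuclideanSpace.single a 1)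
      = fderiv ℝ (Lfull L) (c1, c2, c3, c4, c5, c6) (0, EuclideanSpace.single a 1, 0, 0, 0, 0) := by
  have hι : HasFDerivAt (fun v : E3 => ((c1, v, c3, c4, c5, c6) : Wsp))
      ((0 : E3 →L[ℝ] E3).prod ((ContinuousLinearMap.id ℝ E3).prod 0)) c2 :=
    (hasFDerivAt_const c1 c2).prodMk
      ((hasFDerivAt_id c2).prodMk (hasFDerivAt_const (c3, c4, c5, c6) c2))
  have h : HasFDerivAt (fun v : E3 => L c1 v c3 c4 c5 c6)
      ((fderiv ℝ (Lfull L) (c1, c2, c3, c4, c5, c6)).comp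
        ((0 : E3 →L[ℝ] E3).prod ((ContinuousLinearMap.id ℝ E3).prod 0))) c2 :=
    ((hL.differentiable (by simp) _).hasFDerivAt).comp c2 hι
  rw [h.fderiv]
  simp
  rfl

lemma slot3 (hL : ContDiff ℝ (⊤ : ℕ∞) (Lfull L)) (c1 c2 : E3) (c3 : M3) (c4 c5 : ℝ) (c6 : E3) (a A : Fin 3) :
    fderiv ℝ (fun Fm => L c1 c2 Fm c4 c5 c6) c3 (Pi.single a (Pi.single A 1))
      = fderiv ℝ (Lfull L) (c1, c2, c3, c4, c5, c6) (0, 0, Pi.single a (Pi.single A 1), 0, 0, 0) := by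
  have hι : HasFDerivAt (fun m : M3 => ((c1, c2, m, c4, c5, c6) : Wsp))
      ((0 : M3 →L[ℝ] E3).prod ((0 : M3 →L[ℝ] E3).prod
        ((ContinuousLinearMap.id ℝ M3).prod 0))) c3 :=
    (hasFDerivAt_const c1 c3).prodMk ((hasFDerivAt_const c2 c3).prodMk
      ((hasFDerivAt_id c3).prodMk (hasFDerivAt_const (c4, c5, c6) c3)))
  have h : HasFDerivAt (fun m : M3 => L c1 c2 m c4 c5 c6)
      ((fderiv ℝ (Lfull L) (c1, c2, c3, c4, c5, c6)).comp
        ((0 : M3 →L[ℝ] E3).prod ((0 : M3 →L[ℝ] E3).prod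
          ((ContinuousLinearMap.id ℝ M3).prod 0)))) c3 :=
    ((hL.differentiable (by simp) _).hasFDerivAt).comp c3 hι
  rw [h.fderiv]
  simp
  rfl

lemma slot5 (hL : ContDiff ℝ (⊤ : ℕ∞) (Lfull L)) (c1 c2 : E3) (c3 : M3) (c4 c5 : ℝ) (c6 : E3) :
    deriv (fun s => L c1 c2 c3 c4 s c6) c5
      = fderiv ℝ (Lfull L) (c1, c2, c3, c4, c5, c6) (0, 0, 0, 0, 1, 0) := by
  have hι : HasDerivAt (fun s : ℝ => ((c1, c2, c3, c4, s, c6) : Wsp))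
      (((0, 0, 0, 0, 1, 0) : Wsp)) c5 :=
    (hasDerivAt_const c5 c1).prodMk ((hasDerivAt_const c5 c2).prodMk
      ((hasDerivAt_const c5 c3).prodMk ((hasDerivAt_const c5 c4).prodMk
        ((hasDerivAt_id c5).prodMk (hasDerivAt_const c5 c6)))))
  have h : HasDerivAt (fun s : ℝ => L c1 c2 c3 c4 s c6)
      (fderiv ℝ (Lfull L) (c1, c2, c3, c4, c5, c6) ((0, 0, 0, 0, 1, 0) : Wsp)) c5 :=
    ((hL.differentiable (by simp) _).hasFDerivAt).comp_hasDerivAt c5 hι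
  exact h.deriv

lemma slot6 (hL : ContDiff ℝ (⊤ : ℕ∞) (Lfull L)) (c1 c2 : E3) (c3 : M3) (c4 c5 : ℝ) (c6 : E3) (a : Fin 3) :
    fderiv ℝ (fun q => L c1 c2 c3 c4 c5 q) c6 (EuclideanSpace.single a 1)
      = fderiv ℝ (Lfull L) (c1, c2, c3, c4, c5, c6) (0, 0, 0, 0, 0, EuclideanSpace.single a 1) := by
  have hι : HasFDerivAt (fun q : E3 => ((c1, c2, c3, c4, c5, q) : Wsp))
      ((0 : E3 →L[ℝ] E3).prod ((0 : E3 →L[ℝ] E3).prod ((0 : E3 →L[ℝ] M3).prod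
        ((0 : E3 →L[ℝ] ℝ).prod ((0 : E3 →L[ℝ] ℝ).prod (ContinuousLinearMap.id ℝ E3)))))) c6 :=
    (hasFDerivAt_const c1 c6).prodMk ((hasFDerivAt_const c2 c6).prodMk
      ((hasFDerivAt_const c3 c6).prodMk ((hasFDerivAt_const c4 c6).prodMk
        ((hasFDerivAt_const c5 c6).prodMk (hasFDerivAt_id c6)))))
  have h : HasFDerivAt (fun q : E3 => L c1 c2 c3 c4 c5 q)
      ((fderiv ℝ (Lfull L) (c1, c2, c3, c4, c5, c6)).comp
        ((0 : E3 →L[ℝ] E3).prod ((0 : E3 →L[ℝ] E3).prod ((0 : E3 →L[ℝ] M3).prod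
          ((0 : E3 →L[ℝ] ℝ).prod ((0 : E3 →L[ℝ] ℝ).prod (ContinuousLinearMap.id ℝ E3))))))) c6 :=
    ((hL.differentiable (by simp) _).hasFDerivAt).comp c6 hι
  rw [h.fderiv]
  simp

end slots

section family
variable (J : ℝ → E3 → E3)

lemma hasDerivAt_t {g : ℝ × E3 → ℝ} (hg : ContDiff ℝ (⊤ : ℕ∞) g) (t : ℝ) (X : E3) :
    HasDerivAt (fun s => g (s, X)) (fderiv ℝ g (t, X) (1, 0)) t :=
  ((hg.differentiable (by simp) _).hasFDerivAt).comp_hasDerivAt t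
    ((hasDerivAt_id t).prodMk (hasDerivAt_const t X))

lemma diff_X {g : ℝ × E3 → ℝ} (hg : ContDiff ℝ (⊤ : ℕ∞) g) (t : ℝ) (X : E3) :
    DifferentiableAt ℝ (fun Y => g (t, Y)) X :=
  (((hg.differentiable (by simp)).comp
    ((differentiable_const t).prodMk differentiable_id)).differentiableAt)

lemma Lphi_eqf (hL : ContDiff ℝ (⊤ : ℕ∞) (Lfull L)) (hφ : ContDiff ℝ (⊤ : ℕ∞) (fun p : ℝ × E3 => φ p.1 p.2))
    (t : ℝ) (X : E3) (a : Fin 3) :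
    Lphi L φ ϱ S Q t X a
      = fderiv ℝ (Lfull L) (sm φ ϱ S Q t X) (EuclideanSpace.single a 1, 0, 0, 0, 0, 0) := by
  rw [Lphi, slot1 L hL (φ t X) (vel φ t X) (dg φ t X) (ϱ X) (S t X) (Q t X) a,
    ← sm_eq φ ϱ S Q hφ]

lemma Lv_eqf (hL : ContDiff ℝ (⊤ : ℕ∞) (Lfull L)) (hφ : ContDiff ℝ (⊤ : ℕ∞) (fun p : ℝ × E3 => φ p.1 p.2))
    (t : ℝ) (X : E3) (a : Fin 3) :
    Lv L φ ϱ S Q t X a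
      = fderiv ℝ (Lfull L) (sm φ ϱ S Q t X) (0, EuclideanSpace.single a 1, 0, 0, 0, 0) := by
  rw [Lv, slot2 L hL (φ t X) (vel φ t X) (dg φ t X) (ϱ X) (S t X) (Q t X) a,
    ← sm_eq φ ϱ S Q hφ]

lemma LF_eqf (hL : ContDiff ℝ (⊤ : ℕ∞) (Lfull L)) (hφ : ContDiff ℝ (⊤ : ℕ∞) (fun p : ℝ × E3 => φ p.1 p.2))
    (t : ℝ) (X : E3) (a A : Fin 3) :
    LF L φ ϱ S Q t X a A
      = fderiv ℝ (Lfull L) (sm φ ϱ S Q t X) (0, 0, Pi.single a (Pi.single A 1), 0, 0, 0) := by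
  rw [LF, slot3 L hL (φ t X) (vel φ t X) (dg φ t X) (ϱ X) (S t X) (Q t X) a A,
    ← sm_eq φ ϱ S Q hφ]

lemma LS_eqf (hL : ContDiff ℝ (⊤ : ℕ∞) (Lfull L)) (hφ : ContDiff ℝ (⊤ : ℕ∞) (fun p : ℝ × E3 => φ p.1 p.2))
    (t : ℝ) (X : E3) :
    LS L φ ϱ S Q t X
      = fderiv ℝ (Lfull L) (sm φ ϱ S Q t X) (0, 0, 0, 0, 1, 0) := by
  rw [LS, slot5 L hL (φ t X) (vel φ t X) (dg φ t X) (ϱ X) (S t X) (Q t X),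
    ← sm_eq φ ϱ S Q hφ]

lemma LQ_eqf (hL : ContDiff ℝ (⊤ : ℕ∞) (Lfull L)) (hφ : ContDiff ℝ (⊤ : ℕ∞) (fun p : ℝ × E3 => φ p.1 p.2))
    (t : ℝ) (X : E3) (a : Fin 3) :
    LQ L φ ϱ S Q t X a
      = fderiv ℝ (Lfull L) (sm φ ϱ S Q t X) (0, 0, 0, 0, 0, EuclideanSpace.single a 1) := by
  rw [LQ, slot6 L hL (φ t X) (vel φ t X) (dg φ t X) (ϱ X) (S t X) (Q t X) a,
    ← sm_eq φ ϱ S Q hφ]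

lemma dT_smooth (hL : ContDiff ℝ (⊤ : ℕ∞) (Lfull L))
    (hφ : ContDiff ℝ (⊤ : ℕ∞) (fun p : ℝ × E3 => φ p.1 p.2)) (hϱ : ContDiff ℝ (⊤ : ℕ∞) ϱ)
    (hS : ContDiff ℝ (⊤ : ℕ∞) (fun p : ℝ × E3 => S p.1 p.2))
    (hQ : ContDiff ℝ (⊤ : ℕ∞) (fun p : ℝ × E3 => Q p.1 p.2)) (w : Wsp) :
    ContDiff ℝ (⊤ : ℕ∞) (fun p : ℝ × E3 => fderiv ℝ (Lfull L) (sm φ ϱ S Q p.1 p.2) w) :=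
  ((hL.fderiv_right (by simp)).comp (sm_smooth φ ϱ S Q hφ hϱ hS hQ)).clm_apply contDiff_const

/-- mixed partials commute: `d/dt ∇φ = ∇ φ̇`. -/
lemma dg_dt_comm (hφ : ContDiff ℝ (⊤ : ℕ∞) (fun p : ℝ × E3 => φ p.1 p.2)) (t : ℝ) (X : E3) (a A : Fin 3) :
    deriv (fun s => dg φ s X a A) t = pd (fun Y => vel φ t Y a) A X := by
  have hf : ContDiff ℝ (⊤ : ℕ∞) (fun p : ℝ × E3 => φ p.1 p.2 a) := contDiff_euclidean.1 hφ a
  set f : ℝ × E3 → ℝ := fun p => φ p.1 p.2 a with hfdef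
  have hf' : ContDiff ℝ (⊤ : ℕ∞) (fderiv ℝ f) := hf.fderiv_right (by simp)
  have hD2 : HasFDerivAt (fderiv ℝ f) (fderiv ℝ (fderiv ℝ f) (t, X)) (t, X) :=
    (hf'.differentiable (by simp) _).hasFDerivAt
  have hsymm : ∀ v w : ℝ × E3,
      fderiv ℝ (fderiv ℝ f) (t, X) v w = fderiv ℝ (fderiv ℝ f) (t, X) w v :=
    (hf.contDiffAt).isSymmSndFDerivAt (by rw [minSmoothness_of_isRCLikeNormedField]; exact WithTop.coe_le_coe.mpr (le_top : (2 : ℕ∞) ≤ ⊤))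
  -- LHS
  have e1 : (fun s => dg φ s X a A)
      = fun s => fderiv ℝ f (s, X) ((0:ℝ), EuclideanSpace.single A 1) :=
    funext fun s => dg_eq φ hφ s X a A
  have hg' : HasFDerivAt (fun p : ℝ × E3 => fderiv ℝ f p ((0:ℝ), EuclideanSpace.single A 1))
      ((ContinuousLinearMap.apply ℝ ℝ ((0:ℝ), EuclideanSpace.single A 1)).comp
        (fderiv ℝ (fderiv ℝ f) (t, X))) (t, X) :=
    by
      have h := ((ContinuousLinearMap.apply ℝ ℝ ((0:ℝ), EuclideanSpace.single A 1)
        : ((ℝ × E3) →L[ℝ] ℝ) →L[ℝ] ℝ).hasFDerivAt (x := fderiv ℝ f (t, X))).comp (t, X) hD2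
      exact h
  have lhs : HasDerivAt (fun s => fderiv ℝ f (s, X) ((0:ℝ), EuclideanSpace.single A 1))
      (fderiv ℝ (fderiv ℝ f) (t, X) (1, 0) ((0:ℝ), EuclideanSpace.single A 1)) t :=
    by have h' := hg'.comp_hasDerivAt t ((hasDerivAt_id t).prodMk (hasDerivAt_const t X)); exact h'
  -- RHS
  have e2 : (fun Y => vel φ t Y a) = fun Y => fderiv ℝ f (t, Y) ((1:ℝ), (0:E3)) :=
    funext fun Y => vel_eq φ hφ t Y a
  have hh' : HasFDerivAt (fun p : ℝ × E3 => fderiv ℝ f p ((1:ℝ), (0:E3)))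
      ((ContinuousLinearMap.apply ℝ ℝ ((1:ℝ), (0:E3))).comp
        (fderiv ℝ (fderiv ℝ f) (t, X))) (t, X) :=
    by
      have h := ((ContinuousLinearMap.apply ℝ ℝ ((1:ℝ), (0:E3))
        : ((ℝ × E3) →L[ℝ] ℝ) →L[ℝ] ℝ).hasFDerivAt (x := fderiv ℝ f (t, X))).comp (t, X) hD2
      exact h
  have rhs : HasFDerivAt (fun Y : E3 => fderiv ℝ f (t, Y) ((1:ℝ), (0:E3)))
      (((ContinuousLinearMap.apply ℝ ℝ ((1:ℝ), (0:E3))).comp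
        (fderiv ℝ (fderiv ℝ f) (t, X))).comp
        ((0 : E3 →L[ℝ] ℝ).prod (ContinuousLinearMap.id ℝ E3))) X :=
    hh'.comp X ((hasFDerivAt_const t X).prodMk (hasFDerivAt_id X))
  rw [e1, lhs.deriv, pd, e2, rhs.fderiv]
  simpa using hsymm (1, 0) ((0:ℝ), EuclideanSpace.single A 1)

end family

section pdlemmas
variable {f g : E3 → ℝ} {X : E3}

lemma pd_mul (hf : DifferentiableAt ℝ f X) (hg : DifferentiableAt ℝ g X) (A : Fin 3) :
    pd (fun Y => f Y * g Y) A X = pd f A X * g X + f X * pd g A X := by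
  unfold pd
  rw [fderiv_fun_mul hf hg]
  simp only [ContinuousLinearMap.add_apply, ContinuousLinearMap.smul_apply, smul_eq_mul]
  ring

lemma pd_sub (hf : DifferentiableAt ℝ f X) (hg : DifferentiableAt ℝ g X) (A : Fin 3) :
    pd (fun Y => f Y - g Y) A X = pd f A X - pd g A X := by
  unfold pd
  rw [fderiv_fun_sub hf hg]
  simp

lemma pd_sum {F : Fin 3 → E3 → ℝ} (hf : ∀ a, DifferentiableAt ℝ (F a) X) (A : Fin 3) :
    pd (fun Y => ∑ a : Fin 3, F a Y) A X = ∑ a : Fin 3, pd (F a) A X := by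
  unfold pd
  rw [fderiv_fun_sum (fun a _ => hf a)]
  simp

lemma pd_neg (hf : DifferentiableAt ℝ f X) (A : Fin 3) :
    pd (fun Y => -(f Y)) A X = -(pd f A X) := by
  unfold pd
  rw [fderiv_fun_neg]
  simp

end pdlemmas
/-- given the material evolution equations of extended
irreversible thermodynamics (no viscous flux), the total energy density
`𝔈̂ = (∂𝔏̂/∂φ̇)·φ̇ - 𝔏̂` satisfies the local balance
`d𝔈̂/dt = DIV(P^tot·φ̇ - 𝔗 J)` with `P^tot = -∂𝔏̂/∂∇φ`, `𝔗 = -∂𝔏̂/∂S`. -/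
theorem material_energy_balance_EIT
    (J : ℝ → E3 → E3)
    (hL : ContDiff ℝ (⊤ : ℕ∞) (fun p : E3 × E3 × M3 × ℝ × ℝ × E3 =>
      L p.1 p.2.1 p.2.2.1 p.2.2.2.1 p.2.2.2.2.1 p.2.2.2.2.2))
    (hφ : ContDiff ℝ (⊤ : ℕ∞) (fun p : ℝ × E3 => φ p.1 p.2))
    (hϱ : ContDiff ℝ (⊤ : ℕ∞) ϱ)
    (hS : ContDiff ℝ (⊤ : ℕ∞) (fun p : ℝ × E3 => S p.1 p.2))
    (hQ : ContDiff ℝ (⊤ : ℕ∞) (fun p : ℝ × E3 => Q p.1 p.2))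
    (hJ : ContDiff ℝ (⊤ : ℕ∞) (fun p : ℝ × E3 => J p.1 p.2))
    -- momentum equation: d/dt(∂𝔏̂/∂φ̇) - ∂𝔏̂/∂φ = DIV(-∂𝔏̂/∂∇φ)
    (hEOM1 : ∀ (t : ℝ) (X : E3) (a : Fin 3),
      deriv (fun s => Lv L φ ϱ S Q s X a) t - Lphi L φ ϱ S Q t X a
      = ∑ A : Fin 3, pd (fun Y => -(LF L φ ϱ S Q t Y a A)) A X)
    -- entropy equation: -(∂𝔏̂/∂S)(Ṡ + DIV J) - (∂𝔏̂/∂Q)·Q̇ = J·∇(∂𝔏̂/∂S)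
    (hEOM2 : ∀ (t : ℝ) (X : E3),
      -(LS L φ ϱ S Q t X)
          * (deriv (fun s => S s X) t + ∑ A : Fin 3, pd (fun Y => J t Y A) A X)
        - ∑ a : Fin 3, LQ L φ ϱ S Q t X a * deriv (fun s => Q s X a) t
      = ∑ A : Fin 3, J t X A * pd (fun Y => LS L φ ϱ S Q t Y) A X) :
    ∀ (t : ℝ) (X : E3),
      deriv (fun s => En L φ ϱ S Q s X) t
      = ∑ A : Fin 3, pd (fun Y =>
          (∑ a : Fin 3, (-(LF L φ ϱ S Q t Y a A)) * vel φ t Y a)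
            - (-(LS L φ ϱ S Q t Y)) * J t Y A) A X := by
  intro t X
  have hLf : ContDiff ℝ (⊤ : ℕ∞) (Lfull L) := hL
  have hsm : ContDiff ℝ (⊤ : ℕ∞) (fun p : ℝ × E3 => sm φ ϱ S Q p.1 p.2) :=
    sm_smooth φ ϱ S Q hφ hϱ hS hQ
  set w : Wsp := fderiv ℝ (fun p : ℝ × E3 => sm φ ϱ S Q p.1 p.2) (t, X) (1, 0) with hw
  have hτ : HasDerivAt (fun s => sm φ ϱ S Q s X) w t :=
    ((hsm.differentiable (by simp) _).hasFDerivAt).comp_hasDerivAt t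
      ((hasDerivAt_id t).prodMk (hasDerivAt_const t X))
  -- component derivatives in time
  have hv : ∀ a : Fin 3, HasDerivAt (fun s => vel φ s X a) (w.2.1 a) t := by
    intro a
    have hfun : (fun s => vel φ s X a)
        = fun s => ((EuclideanSpace.proj a).comp
            ((ContinuousLinearMap.fst ℝ E3 (M3 × ℝ × ℝ × E3)).comp
              (ContinuousLinearMap.snd ℝ E3 (E3 × M3 × ℝ × ℝ × E3))))
            (sm φ ϱ S Q s X) :=
      funext fun s => vel_eq φ hφ s X a
    rw [hfun]
    exact ((EuclideanSpace.proj a).comp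
      ((ContinuousLinearMap.fst ℝ E3 (M3 × ℝ × ℝ × E3)).comp
        (ContinuousLinearMap.snd ℝ E3 (E3 × M3 × ℝ × ℝ × E3)))).hasFDerivAt.comp_hasDerivAt t hτ
  have hw1 : ∀ a : Fin 3, w.1 a = vel φ t X a := by
    intro a
    have h : HasDerivAt (fun s => φ s X a) (w.1 a) t := by
      have h2 := ((EuclideanSpace.proj a).comp
        (ContinuousLinearMap.fst ℝ E3 (E3 × M3 × ℝ × ℝ × E3))).hasFDerivAt.comp_hasDerivAt t hτ
      exact h2
    exact h.deriv.symm
  have hw3 : ∀ a A : Fin 3, w.2.2.1 a A = pd (fun Y => vel φ t Y a) A X := by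
    intro a A
    have hfun : (fun s => dg φ s X a A)
        = fun s => ((ContinuousLinearMap.proj (R := ℝ) (φ := fun _ : Fin 3 => ℝ) A).comp
            ((ContinuousLinearMap.proj (R := ℝ) (φ := fun _ : Fin 3 => Fin 3 → ℝ) a).comp
              ((ContinuousLinearMap.fst ℝ M3 (ℝ × ℝ × E3)).comp
                ((ContinuousLinearMap.snd ℝ E3 (M3 × ℝ × ℝ × E3)).comp
                  (ContinuousLinearMap.snd ℝ E3 (E3 × M3 × ℝ × ℝ × E3))))))
            (sm φ ϱ S Q s X) :=
      funext fun s => dg_eq φ hφ s X a A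
    have h : HasDerivAt (fun s => dg φ s X a A) (w.2.2.1 a A) t := by
      rw [hfun]
      exact ((ContinuousLinearMap.proj (R := ℝ) (φ := fun _ : Fin 3 => ℝ) A).comp
        ((ContinuousLinearMap.proj (R := ℝ) (φ := fun _ : Fin 3 => Fin 3 → ℝ) a).comp
          ((ContinuousLinearMap.fst ℝ M3 (ℝ × ℝ × E3)).comp
            ((ContinuousLinearMap.snd ℝ E3 (M3 × ℝ × ℝ × E3)).comp
              (ContinuousLinearMap.snd ℝ E3 (E3 × M3 × ℝ × ℝ × E3)))))).hasFDerivAt.comp_hasDerivAt t hτ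
    rw [← dg_dt_comm φ hφ t X a A]
    exact h.deriv.symm
  have hw4 : w.2.2.2.1 = 0 := by
    have h : HasDerivAt (fun _ : ℝ => ϱ X) (w.2.2.2.1) t := by
      have h2 := ((ContinuousLinearMap.fst ℝ ℝ (ℝ × E3)).comp
        ((ContinuousLinearMap.snd ℝ M3 (ℝ × ℝ × E3)).comp
          ((ContinuousLinearMap.snd ℝ E3 (M3 × ℝ × ℝ × E3)).comp
            (ContinuousLinearMap.snd ℝ E3 (E3 × M3 × ℝ × ℝ × E3))))).hasFDerivAt.comp_hasDerivAt t hτ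
      exact h2
    rw [← h.deriv, deriv_const]
  have hw5 : w.2.2.2.2.1 = deriv (fun s => S s X) t := by
    have h : HasDerivAt (fun s : ℝ => S s X) (w.2.2.2.2.1) t := by
      have h2 := ((ContinuousLinearMap.fst ℝ ℝ E3).comp
        ((ContinuousLinearMap.snd ℝ ℝ (ℝ × E3)).comp
          ((ContinuousLinearMap.snd ℝ M3 (ℝ × ℝ × E3)).comp
            ((ContinuousLinearMap.snd ℝ E3 (M3 × ℝ × ℝ × E3)).comp
              (ContinuousLinearMap.snd ℝ E3 (E3 × M3 × ℝ × ℝ × E3)))))).hasFDerivAt.comp_hasDerivAt t hτ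
      exact h2
    exact h.deriv.symm
  have hw6 : ∀ a : Fin 3, w.2.2.2.2.2 a = deriv (fun s => Q s X a) t := by
    intro a
    have h : HasDerivAt (fun s : ℝ => Q s X a) (w.2.2.2.2.2 a) t := by
      have h2 := ((EuclideanSpace.proj a).comp
        ((ContinuousLinearMap.snd ℝ ℝ E3).comp
          ((ContinuousLinearMap.snd ℝ ℝ (ℝ × E3)).comp
            ((ContinuousLinearMap.snd ℝ M3 (ℝ × ℝ × E3)).comp
              ((ContinuousLinearMap.snd ℝ E3 (M3 × ℝ × ℝ × E3)).comp
                (ContinuousLinearMap.snd ℝ E3 (E3 × M3 × ℝ × ℝ × E3))))))).hasFDerivAt.comp_hasDerivAt t hτ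
      exact h2
    exact h.deriv.symm
  -- derivative of Lval
  have hLval : HasDerivAt (fun s => Lval L φ ϱ S Q s X)
      (fderiv ℝ (Lfull L) (sm φ ϱ S Q t X) w) t := by
    have hfun : (fun s => Lval L φ ϱ S Q s X) = fun s => Lfull L (sm φ ϱ S Q s X) := by
      funext s
      show L (φ s X) (vel φ s X) (dg φ s X) (ϱ X) (S s X) (Q s X) = Lfull L (sm φ ϱ S Q s X)
      rw [sm_eq φ ϱ S Q hφ s X]
      rfl
    rw [hfun]
    exact ((hL.differentiable (by simp) _).hasFDerivAt).comp_hasDerivAt t hτ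
  -- derivative of Lv in time exists
  have hLvd : ∀ a : Fin 3,
      HasDerivAt (fun s => Lv L φ ϱ S Q s X a) (deriv (fun s => Lv L φ ϱ S Q s X a) t) t := by
    intro a
    have hfun : (fun s => Lv L φ ϱ S Q s X a)
        = fun s => fderiv ℝ (Lfull L) (sm φ ϱ S Q s X)
            ((0, EuclideanSpace.single a 1, 0, 0, 0, 0) : Wsp) :=
      funext fun s => Lv_eqf L φ ϱ S Q hLf hφ s X a
    rw [hfun]
    exact (hasDerivAt_t (dT_smooth L φ ϱ S Q hLf hφ hϱ hS hQ
      ((0, EuclideanSpace.single a 1, 0, 0, 0, 0) : Wsp)) t X).differentiableAt.hasDerivAt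
  -- derivative of the energy
  have hEn : HasDerivAt (fun s => En L φ ϱ S Q s X)
      ((∑ a : Fin 3, (deriv (fun s => Lv L φ ϱ S Q s X a) t * vel φ t X a
          + Lv L φ ϱ S Q t X a * w.2.1 a))
        - fderiv ℝ (Lfull L) (sm φ ϱ S Q t X) w) t := by
    have hsum : HasDerivAt (fun s => ∑ a : Fin 3, Lv L φ ϱ S Q s X a * vel φ s X a)
        (∑ a : Fin 3, (deriv (fun s => Lv L φ ϱ S Q s X a) t * vel φ t X a
          + Lv L φ ϱ S Q t X a * w.2.1 a)) t :=
      HasDerivAt.fun_sum fun a _ => (hLvd a).mul (hv a)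
    exact hsum.sub hLval
  rw [hEn.deriv]
  -- expand the full differential
  have hTw := clm_expand (fderiv ℝ (Lfull L) (sm φ ϱ S Q t X)) w
  simp only [← Lphi_eqf L φ ϱ S Q hLf hφ t X, ← Lv_eqf L φ ϱ S Q hLf hφ t X,
    ← LF_eqf L φ ϱ S Q hLf hφ t X, ← LS_eqf L φ ϱ S Q hLf hφ t X,
    ← LQ_eqf L φ ϱ S Q hLf hφ t X] at hTw
  simp only [hw1, hw3, hw4, hw5, hw6] at hTw
  -- spatial differentiability
  have dLF : ∀ a A : Fin 3, DifferentiableAt ℝ (fun Y => LF L φ ϱ S Q t Y a A) X := by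
    intro a A
    have hfun : (fun Y => LF L φ ϱ S Q t Y a A) = fun Y =>
        fderiv ℝ (Lfull L) (sm φ ϱ S Q t Y)
          ((0, 0, Pi.single a (Pi.single A 1), 0, 0, 0) : Wsp) :=
      funext fun Y => LF_eqf L φ ϱ S Q hLf hφ t Y a A
    rw [hfun]
    exact diff_X (dT_smooth L φ ϱ S Q hLf hφ hϱ hS hQ _) t X
  have dnegLF : ∀ a A : Fin 3, DifferentiableAt ℝ (fun Y => -(LF L φ ϱ S Q t Y a A)) X :=
    fun a A => (dLF a A).neg
  have dvel : ∀ a : Fin 3, DifferentiableAt ℝ (fun Y => vel φ t Y a) X := by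
    intro a
    have hfun : (fun Y => vel φ t Y a) = fun Y =>
        (fun p : ℝ × E3 => fderiv ℝ (fun q : ℝ × E3 => φ q.1 q.2 a) p (1, 0)) (t, Y) :=
      funext fun Y => vel_eq φ hφ t Y a
    rw [hfun]
    exact diff_X (((contDiff_euclidean.1 hφ a).fderiv_right (by simp)).clm_apply contDiff_const) t X
  have dLS : DifferentiableAt ℝ (fun Y => LS L φ ϱ S Q t Y) X := by
    have hfun : (fun Y => LS L φ ϱ S Q t Y) = fun Y =>
        fderiv ℝ (Lfull L) (sm φ ϱ S Q t Y) ((0, 0, 0, 0, 1, 0) : Wsp) :=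
      funext fun Y => LS_eqf L φ ϱ S Q hLf hφ t Y
    rw [hfun]
    exact diff_X (dT_smooth L φ ϱ S Q hLf hφ hϱ hS hQ _) t X
  have dJ : ∀ A : Fin 3, DifferentiableAt ℝ (fun Y => J t Y A) X :=
    fun A => diff_X (contDiff_euclidean.1 hJ A) t X
  -- expand the divergence on the right-hand side (flattened form)
  have hpd : ∀ A : Fin 3,
      pd (fun Y => (∑ a : Fin 3, (-(LF L φ ϱ S Q t Y a A)) * vel φ t Y a)
        - (-(LS L φ ϱ S Q t Y)) * J t Y A) A X
      = (∑ a : Fin 3, pd (fun Y => -(LF L φ ϱ S Q t Y a A)) A X * vel φ t X a)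
        + (∑ a : Fin 3, (-(LF L φ ϱ S Q t X a A)) * pd (fun Y => vel φ t Y a) A X)
        + pd (fun Y => LS L φ ϱ S Q t Y) A X * J t X A
        + LS L φ ϱ S Q t X * pd (fun Y => J t Y A) A X := by
    intro A
    have hsum_d : DifferentiableAt ℝ
        (fun Y => ∑ a : Fin 3, (-(LF L φ ϱ S Q t Y a A)) * vel φ t Y a) X :=
      DifferentiableAt.fun_sum (fun a _ => (dnegLF a A).mul (dvel a))
    have hprod_d : DifferentiableAt ℝ (fun Y => (-(LS L φ ϱ S Q t Y)) * J t Y A) X :=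
      (dLS.neg).mul (dJ A)
    rw [pd_sub hsum_d hprod_d A, pd_sum (F := fun a Y => (-(LF L φ ϱ S Q t Y a A)) * vel φ t Y a) (fun a => (dnegLF a A).mul (dvel a)) A,
      pd_mul (f := fun Y => -(LS L φ ϱ S Q t Y)) dLS.neg (dJ A) A, pd_neg dLS A,
      Finset.sum_congr rfl (fun a _ => pd_mul (dnegLF a A) (dvel a) A),
      Finset.sum_add_distrib]
    ring
  rw [Finset.sum_congr rfl (fun A _ => hpd A), hTw]
  rw [Finset.sum_add_distrib, Finset.sum_add_distrib, Finset.sum_add_distrib,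
    Finset.sum_add_distrib]
  have E1 : ∑ A : Fin 3, ∑ a : Fin 3,
        pd (fun Y => -(LF L φ ϱ S Q t Y a A)) A X * vel φ t X a
      = (∑ a : Fin 3, deriv (fun s => Lv L φ ϱ S Q s X a) t * vel φ t X a)
        - ∑ a : Fin 3, vel φ t X a * Lphi L φ ϱ S Q t X a := by
    rw [Finset.sum_comm, ← Finset.sum_sub_distrib]
    refine Finset.sum_congr rfl (fun a _ => ?_)
    rw [← Finset.sum_mul, ← hEOM1 t X a]
    ring
  have E2 : ∑ A : Fin 3, ∑ a : Fin 3,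
        (-(LF L φ ϱ S Q t X a A)) * pd (fun Y => vel φ t Y a) A X
      = -∑ a : Fin 3, ∑ A : Fin 3,
          pd (fun Y => vel φ t Y a) A X * LF L φ ϱ S Q t X a A := by
    rw [Finset.sum_comm, ← Finset.sum_neg_distrib]
    refine Finset.sum_congr rfl (fun a _ => ?_)
    rw [← Finset.sum_neg_distrib]
    exact Finset.sum_congr rfl (fun A _ => by ring)
  have E3 : ∑ A : Fin 3, pd (fun Y => LS L φ ϱ S Q t Y) A X * J t X A
      = -(LS L φ ϱ S Q t X) * deriv (fun s => S s X) t
        - LS L φ ϱ S Q t X * (∑ A : Fin 3, pd (fun Y => J t Y A) A X)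
        - ∑ a : Fin 3, LQ L φ ϱ S Q t X a * deriv (fun s => Q s X a) t := by
    have h2 := hEOM2 t X
    rw [Finset.sum_congr rfl
      (fun A _ => mul_comm (pd (fun Y => LS L φ ϱ S Q t Y) A X) (J t X A)), ← h2]
    ring
  have E4 : ∑ A : Fin 3, LS L φ ϱ S Q t X * pd (fun Y => J t Y A) A X
      = LS L φ ϱ S Q t X * (∑ A : Fin 3, pd (fun Y => J t Y A) A X) :=
    (Finset.mul_sum _ _ _).symm
  rw [E1, E2, E3, E4]
  have c2 : ∑ a : Fin 3, Lv L φ ϱ S Q t X a * w.2.1 a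
      = ∑ a : Fin 3, w.2.1 a * Lv L φ ϱ S Q t X a :=
    Finset.sum_congr rfl (fun a _ => mul_comm _ _)
  have c3 : ∑ a : Fin 3, LQ L φ ϱ S Q t X a * deriv (fun s => Q s X a) t
      = ∑ a : Fin 3, deriv (fun s => Q s X a) t * LQ L φ ϱ S Q t X a :=
    Finset.sum_congr rfl (fun a _ => mul_comm _ _)
  rw [c2, c3]
  ring
end
end
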